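/- Let p ≥ 2 be an integer, θ > 0, R > 0, N ≥ 1, and let A_1, …, A_N ≥ 0 and L_0, …, L_{N−1} > 0 satisfy Σ_{k=1}^N A_k L_{k−1}^{(p+1)/(p−1)} ≤ 2 R^2 θ^{−2/(p−1)} and A_N ≥ (1/4)(Σ_{k=1}^N 1/sqrt(L_{k−1}))^2. Then A_N ≥ (1/4) · θ^{2/(p+1)} / (2R^2)^{(p−1)/(p+1)} · (Σ_{k=1}^N A_k^{(p−1)/(3p+1)})^{(3p+1)/(p+1)}. -/

import Mathlib

/-!
Put `α = (p - 1)/(3p + 1)`, so that `1 - α = 2(p + 1)/(3p + 1)`. Hölder's inequality with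
exponents `1/α` and `1/(1 - α)`, applied to
`A_k^α = (A_k L_{k-1}^{(p+1)/(p-1)})^α · L_{k-1}^{-α(p+1)/(p-1)}`, gives
`∑ A_k^α ≤ (∑ A_k L_{k-1}^{(p+1)/(p-1)})^α (∑ L_{k-1}^{-1/2})^{1-α}`, the weight exponent
having been chosen so that `α/(1 - α) · (p + 1)/(p - 1) = 1/2`. Raising this to the power
`(3p + 1)/(p + 1) = 2/(1 - α)` and inserting the two hypotheses gives the claim.
-/

open Finset Real

variable {ι : Type*} (s : Finset ι)

theorem sum_rpow_le_rpow_sum_mul_mul_rpow_sum_rpow_neg {α : ℝ}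
    (hα₀ : 0 < α) (hα₁ : α < 1) {a w : ι → ℝ} (ha : ∀ i ∈ s, 0 ≤ a i) (hw : ∀ i ∈ s, 0 < w i) :
    ∑ i ∈ s, a i ^ α
      ≤ (∑ i ∈ s, a i * w i) ^ α * (∑ i ∈ s, w i ^ (-(α / (1 - α)))) ^ (1 - α) := by
  have holder := inner_le_Lp_mul_Lq_of_nonneg s (.inv_one_sub_inv hα₀ hα₁)
    (f := fun i ↦ (a i * w i) ^ α) (g := fun i ↦ w i ^ (-α))
    (fun i hi ↦ by have := ha i hi; have := hw i hi; positivity)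
    (fun i hi ↦ by have := hw i hi; positivity)
  simp only [one_div, inv_inv] at holder
  calc ∑ i ∈ s, a i ^ α = ∑ i ∈ s, (a i * w i) ^ α * w i ^ (-α) := sum_congr rfl fun i hi ↦ by
        rw [mul_rpow (ha i hi) (hw i hi).le, mul_assoc, ← rpow_add (hw i hi), add_neg_cancel,
          rpow_zero, mul_one]
    _ ≤ _ := holder
    _ = _ := by
        congr 2 <;> refine sum_congr rfl fun i hi ↦ ?_
        · rw [← rpow_mul (mul_nonneg (ha i hi) (hw i hi).le), mul_inv_cancel₀ hα₀.ne', rpow_one]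
        · rw [← rpow_mul (hw i hi).le, neg_mul, div_eq_mul_inv]

theorem rpow_sum_rpow_le_mul_sq_sum_inv_sqrt {p : ℝ} (hp : 1 < p)
    {a l : ι → ℝ} (ha : ∀ i ∈ s, 0 ≤ a i) (hl : ∀ i ∈ s, 0 < l i) :
    (∑ i ∈ s, a i ^ ((p - 1) / (3 * p + 1))) ^ ((3 * p + 1) / (p + 1))
      ≤ (∑ i ∈ s, a i * l i ^ ((p + 1) / (p - 1))) ^ ((p - 1) / (p + 1))
        * (∑ i ∈ s, 1 / √(l i)) ^ 2 := by
  have hp₁ : p - 1 ≠ 0 := by linarith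
  have hp₂ : p + 1 ≠ 0 := by linarith
  set α := (p - 1) / (3 * p + 1)
  have hα₀ : 0 < α := by positivity
  have hα₁ : α < 1 := by rw [div_lt_one (by linarith)]; linarith
  have hratio : α / (1 - α) = (p - 1) / (2 * (p + 1)) := by
    have h₃ : 3 * p + 1 ≠ 0 := by linarith
    rw [one_sub_div h₃, div_div_div_cancel_right₀ h₃]
    ring
  have hweight : ∀ i ∈ s, (l i ^ ((p + 1) / (p - 1))) ^ (-(α / (1 - α))) = 1 / √(l i) := by
    intro i hi
    rw [← rpow_mul (hl i hi).le, sqrt_eq_rpow, one_div, ← rpow_neg (hl i hi).le, hratio]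
    field_simp
  have holder := sum_rpow_le_rpow_sum_mul_mul_rpow_sum_rpow_neg s hα₀ hα₁ ha
    (fun i hi ↦ rpow_pos_of_pos (hl i hi) ((p + 1) / (p - 1)))
  rw [sum_congr rfl hweight] at holder
  have hS : 0 ≤ ∑ i ∈ s, a i * l i ^ ((p + 1) / (p - 1)) :=
    sum_nonneg fun i hi ↦ mul_nonneg (ha i hi) (rpow_nonneg (hl i hi).le _)
  have hT : 0 ≤ ∑ i ∈ s, 1 / √(l i) := sum_nonneg fun i _ ↦ by positivity
  calc _ ≤ (_ ^ α * _ ^ (1 - α)) ^ ((3 * p + 1) / (p + 1)) :=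
        rpow_le_rpow (sum_nonneg fun i hi ↦ rpow_nonneg (ha i hi) α) holder (by positivity)
    _ = _ := by
        rw [mul_rpow (rpow_nonneg hS α) (rpow_nonneg hT _), ← rpow_mul hS, ← rpow_mul hT,
          ← rpow_natCast]
        congr 2
        · simp only [α]; field_simp
        · simp only [α]; field_simp; ring

theorem A_N_growth_estimate (p : ℕ) (hp : 2 ≤ p) (θ R : ℝ) (hθ : 0 < θ) (hR : 0 < R)
    (N : ℕ) (A L : ℕ → ℝ)
    (hA : ∀ k ∈ Finset.Icc 1 N, 0 ≤ A k)
    (hL : ∀ k ∈ Finset.Icc 1 N, 0 < L (k - 1))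
    (h1 : ∑ k ∈ Finset.Icc 1 N, A k * L (k - 1) ^ (((p : ℝ) + 1) / ((p : ℝ) - 1))
      ≤ 2 * R ^ 2 * θ ^ (-(2 : ℝ) / ((p : ℝ) - 1)))
    (h2 : A N ≥ (1 / 4) * (∑ k ∈ Finset.Icc 1 N, 1 / Real.sqrt (L (k - 1))) ^ 2) :
    A N ≥ (1 / 4) * θ ^ ((2 : ℝ) / ((p : ℝ) + 1)) / (2 * R ^ 2) ^ (((p : ℝ) - 1) / ((p : ℝ) + 1))
      * (∑ k ∈ Finset.Icc 1 N, A k ^ (((p : ℝ) - 1) / (3 * (p : ℝ) + 1)))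
          ^ ((3 * (p : ℝ) + 1) / ((p : ℝ) + 1)) := by
  have hp' : (1 : ℝ) < p := by exact_mod_cast hp
  have hS : 0 ≤ ∑ k ∈ Icc 1 N, A k * L (k - 1) ^ (((p : ℝ) + 1) / ((p : ℝ) - 1)) :=
    sum_nonneg fun k hk ↦ mul_nonneg (hA k hk) (rpow_nonneg (hL k hk).le _)
  have hθ_pow : (θ ^ (-(2 : ℝ) / (p - 1))) ^ (((p : ℝ) - 1) / (p + 1))
      = (θ ^ ((2 : ℝ) / (p + 1)))⁻¹ := by
    rw [← rpow_mul hθ.le, ← rpow_neg hθ.le]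
    have : (p : ℝ) - 1 ≠ 0 := by linarith
    field_simp
  have hδ : (0 : ℝ) ≤ (p - 1) / (p + 1) := div_nonneg (by linarith) (by linarith)
  have hS_rpow := rpow_le_rpow hS h1 hδ
  rw [mul_rpow (by positivity) (by positivity), hθ_pow] at hS_rpow
  have key := (rpow_sum_rpow_le_mul_sq_sum_inv_sqrt (Icc 1 N) hp' hA
    (l := fun k ↦ L (k - 1)) hL).trans
    (mul_le_mul hS_rpow (by linarith : _ ≤ 4 * A N) (sq_nonneg _) (by positivity))
  refine (mul_le_mul_of_nonneg_left key (by positivity)).trans_eq ?_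
  field_simp
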